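/- Let σ > 0, λ > 0, x0 ∈ ℝ^P, and Y = x0 + W with W_i independent N(0,σ²). Then the degrees of freedom of hard thresholding admits the closed form DOF_HT(x0,λ) = (P − (1/2)·Σ_{i=1}^P [erf(((x0)_i + λ)/(√2·σ)) − erf(((x0)_i − λ)/(√2·σ))]) + (λ/(√(2π)·σ))·Σ_{i=1}^P [exp(−((x0)_i + λ)²/(2σ²)) + exp(−((x0)_i − λ)²/(2σ²))]. -/

import Mathlib

/-!
Write `Y = c + W ~ N(c, σ²)` and `HT λ y = y - y·1{|y| < λ}`. Then
`Cov(Y, HT λ Y) = σ² - E[(Y - c) Y; |Y| < λ]`, and since the Gaussian density satisfies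
`(y - c) φ(y) = -σ² φ'(y)`, integrating by parts over `[-λ, λ]` (Stein's identity on an
interval) gives `E[(Y - c) Y; |Y| < λ] = σ² P(|Y| < λ) - σ² λ (φ(λ) + φ(-λ))`.
The probability is a difference of two values of `erf`, and summing over the coordinates
gives the formula.
-/

open MeasureTheory ProbabilityTheory Filter Real

/-- Scalar hard thresholding at threshold `lam`. -/
noncomputable def HT (lam y : ℝ) : ℝ := if |y| < lam then 0 else y

/-- Covariance of two real random variables. -/
noncomputable def cov {Ω : Type*} [MeasurableSpace Ω] (μ : Measure Ω) (X Y : Ω → ℝ) : ℝ :=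
  ∫ ω, (X ω - ∫ x, X x ∂μ) * (Y ω - ∫ x, Y x ∂μ) ∂μ

/-- The Gauss error function `erf t = (2/√π) ∫₀ᵗ exp(−s²) ds`. -/
noncomputable def erf (t : ℝ) : ℝ :=
  (2 / Real.sqrt π) * ∫ s in (0 : ℝ)..t, Real.exp (-s ^ 2)

open scoped NNReal

lemma HT_eq_id_sub_indicator (lam : ℝ) : HT lam = id - (Set.Ioo (-lam) lam).indicator id := by
  ext y
  simp only [HT, Pi.sub_apply, Set.indicator_apply, Set.mem_Ioo, ← abs_lt, id]
  split_ifs <;> ring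

lemma measurable_HT (lam : ℝ) : Measurable (HT lam) := by
  rw [HT_eq_id_sub_indicator]
  exact measurable_id.sub (measurable_id.indicator measurableSet_Ioo)

lemma cov_eq_covariance {Ω : Type*} [MeasurableSpace Ω] (μ : Measure Ω) (X Y : Ω → ℝ) :
    cov μ X Y = cov[X, Y; μ] := rfl

lemma hasDerivAt_erf (t : ℝ) : HasDerivAt erf (2 / √π * exp (-t ^ 2)) t := by
  have hc : Continuous fun s : ℝ => exp (-s ^ 2) := by fun_prop
  exact (intervalIntegral.integral_hasDerivAt_right (hc.intervalIntegrable _ _)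
    hc.stronglyMeasurable.stronglyMeasurableAtFilter hc.continuousAt).const_mul _

lemma erf_neg (t : ℝ) : erf (-t) = -erf t := by
  have h := intervalIntegral.integral_comp_neg (a := 0) (b := t) fun s => exp (-s ^ 2)
  simp only [neg_sq, neg_zero] at h
  rw [erf, erf, h, intervalIntegral.integral_symm]
  ring

namespace ProbabilityTheory

lemma covariance_eq_integral_sub_mul {Ω : Type*} [MeasurableSpace Ω] {μ : Measure Ω}
    [IsProbabilityMeasure μ] {X Y : Ω → ℝ} (hX : MemLp X 2 μ) (hY : MemLp Y 2 μ) :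
    cov[X, Y; μ] = ∫ ω, (X ω - μ[X]) * Y ω ∂μ := by
  have hXc : MemLp (fun ω => X ω - μ[X]) 2 μ := hX.sub (memLp_const _)
  have hmean : ∫ ω, (X ω - μ[X]) ∂μ = 0 := by
    rw [integral_sub (hX.integrable one_le_two) (integrable_const _)]
    simp
  have hXcY : Integrable (fun ω => (X ω - μ[X]) * Y ω) μ := hXc.integrable_mul hY
  have hXcEY : Integrable (fun ω => (X ω - μ[X]) * μ[Y]) μ :=
    (hXc.integrable one_le_two).mul_const _
  simp_rw [covariance, mul_sub]
  rw [integral_sub hXcY hXcEY, integral_mul_const, hmean, zero_mul, sub_zero]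

lemma hasDerivAt_gaussianPDFReal (μ : ℝ) (v : ℝ≥0) (x : ℝ) :
    HasDerivAt (gaussianPDFReal μ v) (-((x - μ) / v) * gaussianPDFReal μ v x) x := by
  have h := ((((hasDerivAt_id' x).sub_const μ).fun_pow 2).fun_neg.div_const
    (2 * (v : ℝ))).exp.const_mul (√(2 * π * v))⁻¹
  refine h.congr_deriv ?_
  simp only [gaussianPDFReal]
  ring

lemma continuous_gaussianPDFReal (μ : ℝ) (v : ℝ≥0) : Continuous (gaussianPDFReal μ v) := by
  rw [gaussianPDFReal_def]
  fun_prop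

lemma integral_sub_mul_mul_gaussianPDFReal {v : ℝ≥0} (hv : v ≠ 0) (μ a b : ℝ) :
    ∫ y in a..b, (y - μ) * y * gaussianPDFReal μ v y
      = v * (∫ y in a..b, gaussianPDFReal μ v y)
        - v * (b * gaussianPDFReal μ v b - a * gaussianPDFReal μ v a) := by
  have hcont := continuous_gaussianPDFReal μ v
  have hderiv : ∀ y, HasDerivAt (fun y => -(v * (y * gaussianPDFReal μ v y)))
      ((y - μ) * y * gaussianPDFReal μ v y - v * gaussianPDFReal μ v y) y := by
    intro y
    refine (((hasDerivAt_id y).mul (hasDerivAt_gaussianPDFReal μ v y)).const_mul _).neg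
      |>.congr_deriv ?_
    simp only [id]
    field_simp
    ring
  have hcont' : Continuous fun y => (y - μ) * y * gaussianPDFReal μ v y := by fun_prop
  have hFTC := intervalIntegral.integral_eq_sub_of_hasDerivAt (a := a) (b := b)
    (fun y _ => hderiv y) ((hcont'.sub (hcont.const_mul _)).intervalIntegrable _ _)
  rw [intervalIntegral.integral_sub (hcont'.intervalIntegrable _ _)
    ((hcont.const_mul _).intervalIntegrable _ _), intervalIntegral.integral_const_mul] at hFTC
  linear_combination hFTC

lemma gaussianPDFReal_of_coe_eq_sq {v : ℝ≥0} {σ : ℝ} (hσ : 0 ≤ σ)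
    (hv : (v : ℝ) = σ ^ 2) (μ x : ℝ) :
    gaussianPDFReal μ v x = exp (-(x - μ) ^ 2 / (2 * σ ^ 2)) / (√(2 * π) * σ) := by
  rw [gaussianPDFReal, hv, sqrt_mul (by positivity), sqrt_sq hσ, inv_mul_eq_div]

lemma integral_gaussianPDFReal_eq_erf {v : ℝ≥0} {σ : ℝ} (hσ : 0 < σ)
    (hv : (v : ℝ) = σ ^ 2) (μ a b : ℝ) :
    ∫ y in a..b, gaussianPDFReal μ v y
      = (erf ((b - μ) / (√2 * σ)) - erf ((a - μ) / (√2 * σ))) / 2 := by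
  have hderiv : ∀ y, HasDerivAt (fun y => erf ((y - μ) / (√2 * σ)) / 2)
      (gaussianPDFReal μ v y) y := by
    intro y
    refine ((hasDerivAt_erf _).comp y (((hasDerivAt_id y).sub_const μ).div_const _)).div_const 2
      |>.congr_deriv ?_
    rw [gaussianPDFReal_of_coe_eq_sq hσ.le hv, sqrt_mul zero_le_two, id, div_pow, mul_pow,
      sq_sqrt zero_le_two]
    field_simp
  rw [intervalIntegral.integral_eq_sub_of_hasDerivAt (fun y _ => hderiv y)
    ((continuous_gaussianPDFReal _ _).intervalIntegrable _ _)]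
  ring

lemma covariance_id_indicator_Ioo_gaussianReal {v : ℝ≥0} (hv : v ≠ 0) (μ : ℝ) {lam : ℝ}
    (hlam : 0 ≤ lam) :
    cov[id, (Set.Ioo (-lam) lam).indicator id; gaussianReal μ v]
      = ∫ y in -lam..lam, (y - μ) * y * gaussianPDFReal μ v y := by
  have hid : MemLp id 2 (gaussianReal μ v) := memLp_id_gaussianReal 2
  have hpointwise : ∀ y,
      gaussianPDFReal μ v y • ((y - μ) * (Set.Ioo (-lam) lam).indicator id y)
        = (Set.Ioo (-lam) lam).indicator (fun y => (y - μ) * y * gaussianPDFReal μ v y) y := by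
    intro y
    by_cases hy : y ∈ Set.Ioo (-lam) lam
    · simp only [Set.indicator_of_mem hy, id, smul_eq_mul]; ring
    · simp [Set.indicator_of_notMem hy]
  rw [covariance_eq_integral_sub_mul hid (hid.indicator measurableSet_Ioo)]
  simp only [id, integral_id_gaussianReal]
  rw [integral_gaussianReal_eq_integral_smul hv]
  simp only [hpointwise]
  rw [integral_indicator measurableSet_Ioo, ← integral_Ioc_eq_integral_Ioo,
    ← intervalIntegral.integral_of_le (by linarith)]

lemma covariance_id_HT_gaussianReal {v : ℝ≥0} {σ : ℝ} (hσ : 0 < σ)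
    (hv : (v : ℝ) = σ ^ 2) {lam : ℝ} (hlam : 0 ≤ lam) (c : ℝ) :
    cov[id, HT lam; gaussianReal c v] / σ ^ 2
      = (1 - 1 / 2 * (erf ((c + lam) / (√2 * σ)) - erf ((c - lam) / (√2 * σ))))
        + lam / (√(2 * π) * σ)
          * (exp (-(c + lam) ^ 2 / (2 * σ ^ 2)) + exp (-(c - lam) ^ 2 / (2 * σ ^ 2))) := by
  have hv0 : v ≠ 0 := by
    rw [ne_eq, ← NNReal.coe_eq_zero, hv]; exact (pow_pos hσ 2).ne'
  have hid : MemLp id 2 (gaussianReal c v) := memLp_id_gaussianReal 2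
  rw [HT_eq_id_sub_indicator, covariance_sub_right hid hid (hid.indicator measurableSet_Ioo),
    covariance_self aemeasurable_id, variance_id_gaussianReal,
    covariance_id_indicator_Ioo_gaussianReal hv0 c hlam, integral_sub_mul_mul_gaussianPDFReal hv0,
    integral_gaussianPDFReal_eq_erf hσ hv, gaussianPDFReal_of_coe_eq_sq hσ.le hv,
    gaussianPDFReal_of_coe_eq_sq hσ.le hv, hv,
    show (lam - c) / (√2 * σ) = -((c - lam) / (√2 * σ)) by ring,
    show (-lam - c) / (√2 * σ) = -((c + lam) / (√2 * σ)) by ring, erf_neg, erf_neg,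
    show (lam - c) ^ 2 = (c - lam) ^ 2 by ring, show (-lam - c) ^ 2 = (c + lam) ^ 2 by ring]
  field_simp
  ring

end ProbabilityTheory

theorem dof_hard_thresholding_closed_form_general
    {Ω : Type*} [MeasurableSpace Ω] (μpr : Measure Ω)
    (P : ℕ) (σ lam : ℝ) (hσ : 0 < σ) (hlam : 0 < lam)
    (x0 : Fin P → ℝ) (W : Fin P → Ω → ℝ)
    (hmeas : ∀ i, Measurable (W i))
    (hdist : ∀ i, Measure.map (W i) μpr = gaussianReal 0 ⟨σ ^ 2, sq_nonneg σ⟩) :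
    (∑ i, cov μpr (fun ω => x0 i + W i ω) (fun ω => HT lam (x0 i + W i ω)) / σ ^ 2)
      = ((P : ℝ) - (1 / 2) *
          ∑ i, (erf ((x0 i + lam) / (Real.sqrt 2 * σ)) -
                erf ((x0 i - lam) / (Real.sqrt 2 * σ)))) +
        lam / (Real.sqrt (2 * π) * σ) *
          ∑ i, (Real.exp (-(x0 i + lam) ^ 2 / (2 * σ ^ 2)) +
                Real.exp (-(x0 i - lam) ^ 2 / (2 * σ ^ 2))) := by
  have hcov : ∀ i, cov μpr (fun ω => x0 i + W i ω) (fun ω => HT lam (x0 i + W i ω))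
      = cov[id, HT lam; gaussianReal (x0 i) ⟨σ ^ 2, sq_nonneg σ⟩] := by
    intro i
    have hlaw : HasLaw (fun ω => x0 i + W i ω)
        (gaussianReal (x0 i) ⟨σ ^ 2, sq_nonneg σ⟩) μpr := by
      simpa using gaussianReal_const_add ⟨(hmeas i).aemeasurable, hdist i⟩ (x0 i)
    exact hlaw.covariance_fun_comp aemeasurable_id (measurable_HT lam).aemeasurable
  simp only [hcov, covariance_id_HT_gaussianReal (v := ⟨σ ^ 2, sq_nonneg σ⟩) hσ rfl hlam.le]
  rw [Finset.sum_add_distrib, Finset.sum_sub_distrib, ← Finset.mul_sum, ← Finset.mul_sum,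
    Finset.sum_const, Finset.card_univ, Fintype.card_fin, nsmul_eq_mul, mul_one]

/-- closed form of the degrees of freedom of hard thresholding. -/
theorem dof_hard_thresholding_closed_form
    {Ω : Type*} [MeasurableSpace Ω] (μpr : Measure Ω) [IsProbabilityMeasure μpr]
    (P : ℕ) (σ lam : ℝ) (hσ : 0 < σ) (hlam : 0 < lam)
    (x0 : Fin P → ℝ) (W : Fin P → Ω → ℝ)
    (hmeas : ∀ i, Measurable (W i))
    (hindep : iIndepFun W μpr)
    (hdist : ∀ i, Measure.map (W i) μpr = gaussianReal 0 ⟨σ ^ 2, sq_nonneg σ⟩) :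
    (∑ i, cov μpr (fun ω => x0 i + W i ω) (fun ω => HT lam (x0 i + W i ω)) / σ ^ 2)
      = ((P : ℝ) - (1 / 2) *
          ∑ i, (erf ((x0 i + lam) / (Real.sqrt 2 * σ)) -
                erf ((x0 i - lam) / (Real.sqrt 2 * σ)))) +
        lam / (Real.sqrt (2 * π) * σ) *
          ∑ i, (Real.exp (-(x0 i + lam) ^ 2 / (2 * σ ^ 2)) +
                Real.exp (-(x0 i - lam) ^ 2 / (2 * σ ^ 2))) :=
  dof_hard_thresholding_closed_form_general μpr P σ lam hσ hlam x0 W hmeas hdist
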